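/- For all x ∈ (-1,1), one has ∫_{-1}^{1} G(x,y) dy = √(1-x²). -/

import Mathlib

/-!
With `N(y) = 1 - xy + √(1-x²)√(1-y²)`, one checks
`(y - x) N'(y) / N(y) = 1 - √(1-x²)/√(1-y²)`, so that
`π H(y) = (y - x) log N(y) - (y - x) log (y - x) - √(1-x²) arccos y`
has derivative `π G(x,y)` for `y ≠ x`. `H` is continuous on `[-1,1]` since `t log t → 0`,
so the logarithmic singularity at `y = x` is harmless, and `H(1) - H(-1) = √(1-x²)`.
-/

/-- The Green function of the square root of the Laplacian on `(-1,1)`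
with homogeneous Dirichlet exterior condition. -/
noncomputable def G (x y : ℝ) : ℝ :=
  if x ∈ Set.Ioo (-1:ℝ) 1 ∧ y ∈ Set.Ioo (-1:ℝ) 1 then
    (1 / Real.pi) * Real.log ((1 - x*y + Real.sqrt ((1 - x^2) * (1 - y^2))) / |x - y|)
  else 0

open Real Set MeasureTheory intervalIntegral

noncomputable def greenNumerator (x y : ℝ) : ℝ :=
  1 - x * y + √(1 - x ^ 2) * √(1 - y ^ 2)

/-- Mathlib's `log (y - x)` is `log |y - x|`, so this is an antiderivative on both sides of `x`. -/
noncomputable def greenPrimitive (x y : ℝ) : ℝ :=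
  ((y - x) * log (greenNumerator x y) - (y - x) * log (y - x) - √(1 - x ^ 2) * arccos y) / π

section

variable {x y : ℝ}

lemma greenNumerator_pos (hx : x ∈ Ioo (-1 : ℝ) 1) (hy : y ∈ Icc (-1 : ℝ) 1) :
    0 < greenNumerator x y := by
  have hxy : |x * y| < 1 := by
    rw [abs_mul]
    exact mul_lt_one_of_nonneg_of_lt_one_left (abs_nonneg x) (abs_lt.2 hx) (abs_le.2 hy)
  unfold greenNumerator
  linarith [(abs_lt.1 hxy).2, mul_nonneg (sqrt_nonneg (1 - x ^ 2)) (sqrt_nonneg (1 - y ^ 2))]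

lemma G_eq_log_sub_log (hx : x ∈ Ioo (-1 : ℝ) 1) (hy : y ∈ Ioo (-1 : ℝ) 1) (hxy : y ≠ x) :
    G x y = (log (greenNumerator x y) - log (y - x)) / π := by
  have hx2 : 0 ≤ 1 - x ^ 2 := by nlinarith [hx.1, hx.2]
  rw [G, if_pos ⟨hx, hy⟩, sqrt_mul hx2, ← greenNumerator,
    log_div (greenNumerator_pos hx (Ioo_subset_Icc_self hy)).ne'
      (by simpa [sub_eq_zero] using hxy.symm),
    abs_sub_comm, log_abs]
  ring

lemma continuous_greenNumerator : Continuous (greenNumerator x) := by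
  unfold greenNumerator
  fun_prop

lemma continuousOn_log_greenNumerator (hx : x ∈ Ioo (-1 : ℝ) 1) :
    ContinuousOn (fun y => log (greenNumerator x y)) (Icc (-1) 1) :=
  continuous_greenNumerator.continuousOn.log fun _ hy => (greenNumerator_pos hx hy).ne'

lemma hasDerivAt_greenNumerator (hy : y ∈ Ioo (-1 : ℝ) 1) :
    HasDerivAt (greenNumerator x) (-x - √(1 - x ^ 2) * y / √(1 - y ^ 2)) y := by
  have hy2 : 0 < 1 - y ^ 2 := by nlinarith [hy.1, hy.2]
  have hsqrt : HasDerivAt (fun y => √(1 - y ^ 2)) (-(2 * y) / (2 * √(1 - y ^ 2))) y :=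
    (by simpa using (hasDerivAt_pow 2 y).const_sub 1 : HasDerivAt (fun y => 1 - y ^ 2) _ y).sqrt
      hy2.ne'
  refine (((hasDerivAt_id' y).const_mul x).const_sub 1 |>.add
    (hsqrt.const_mul (√(1 - x ^ 2)))).congr_deriv ?_
  field_simp
  ring

lemma sub_mul_deriv_greenNumerator (hx : x ∈ Ioo (-1 : ℝ) 1) (hy : y ∈ Ioo (-1 : ℝ) 1) :
    (y - x) * (-x - √(1 - x ^ 2) * y / √(1 - y ^ 2)) =
      (1 - √(1 - x ^ 2) / √(1 - y ^ 2)) * greenNumerator x y := by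
  have ha := sq_sqrt (by nlinarith [hx.1, hx.2] : 0 ≤ 1 - x ^ 2)
  have hb := sq_sqrt (by nlinarith [hy.1, hy.2] : 0 ≤ 1 - y ^ 2)
  have hb0 : √(1 - y ^ 2) ≠ 0 := (sqrt_pos.2 (by nlinarith [hy.1, hy.2])).ne'
  unfold greenNumerator
  field_simp
  linear_combination √(1 - y ^ 2) * ha - √(1 - x ^ 2) * hb

lemma hasDerivAt_greenPrimitive (hx : x ∈ Ioo (-1 : ℝ) 1) (hy : y ∈ Ioo (-1 : ℝ) 1)
    (hxy : y ≠ x) :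
    HasDerivAt (greenPrimitive x) ((log (greenNumerator x y) - log (y - x)) / π) y := by
  have hN := (greenNumerator_pos hx (Ioo_subset_Icc_self hy)).ne'
  have hshift : HasDerivAt (fun y => y - x) 1 y := (hasDerivAt_id' y).sub_const x
  have hlogN := (hasDerivAt_greenNumerator hy).log hN
  have hmulLog := (hasDerivAt_mul_log (sub_ne_zero.2 hxy)).comp y hshift
  have harccos := (hasDerivAt_arccos hy.1.ne' hy.2.ne).const_mul (√(1 - x ^ 2))
  refine (((hshift.mul hlogN).sub hmulLog).sub harccos |>.div_const π).congr_deriv ?_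
  rw [← mul_div_assoc, sub_mul_deriv_greenNumerator hx hy, mul_div_cancel_right₀ _ hN]
  ring

lemma continuousOn_greenPrimitive (hx : x ∈ Ioo (-1 : ℝ) 1) :
    ContinuousOn (greenPrimitive x) (Icc (-1) 1) := by
  have hmulLog : Continuous fun y => (y - x) * log (y - x) := by fun_prop
  unfold greenPrimitive
  exact ((((continuous_sub_right x).continuousOn.mul (continuousOn_log_greenNumerator hx)).sub
    hmulLog.continuousOn).sub (by fun_prop)).div_const π

lemma greenPrimitive_one : greenPrimitive x 1 = 0 := by
  simp [greenPrimitive, greenNumerator]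

lemma greenPrimitive_neg_one : greenPrimitive x (-1) = -√(1 - x ^ 2) := by
  have hN : greenNumerator x (-1) = -(-1 - x) := by simp [greenNumerator]; ring
  rw [greenPrimitive, hN, log_neg_eq_log, arccos_neg_one]
  field_simp
  ring

lemma intervalIntegrable_G (hx : x ∈ Ioo (-1 : ℝ) 1) :
    IntervalIntegrable (G x) volume (-1) 1 := by
  have hlogN : IntervalIntegrable (fun y => log (greenNumerator x y)) volume (-1) 1 :=
    (continuousOn_log_greenNumerator hx).intervalIntegrable_of_Icc (by norm_num)
  have hlogShift : IntervalIntegrable (fun y => log (y - x)) volume (-1) 1 := by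
    simpa using (intervalIntegrable_log' (a := -1 - x) (b := 1 - x)).comp_sub_right x
  refine (hlogN.sub hlogShift).div_const π |>.congr_ae ?_
  rw [uIoc_of_le (by norm_num), ← restrict_Ioo_eq_restrict_Ioc]
  filter_upwards [ae_restrict_mem measurableSet_Ioo, ae_restrict_of_ae (Measure.ae_ne volume x)]
    with y hy hyx
  exact (G_eq_log_sub_log hx hy hyx).symm

end

theorem stmt_2 (x : ℝ) (hx : x ∈ Set.Ioo (-1:ℝ) 1) :
    ∫ y in (-1:ℝ)..1, G x y = Real.sqrt (1 - x^2) := by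
  rw [integral_eq_of_hasDerivAt_off_countable_of_le (greenPrimitive x) (G x) (by norm_num)
      (countable_singleton x) (continuousOn_greenPrimitive hx) (fun y hy => ?_)
      (intervalIntegrable_G hx), greenPrimitive_one, greenPrimitive_neg_one, zero_sub, neg_neg]
  rw [G_eq_log_sub_log hx hy.1 hy.2]
  exact hasDerivAt_greenPrimitive hx hy.1 hy.2
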